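/- arXiv:2010.11873 — 2 statements merged into one kernel-verified Lean document; each statement's English description precedes it below -/
import Mathlib

section
/- Let F be a field, λ ∈ F, and let s, t be positive integers. Then the Kronecker product J_s(0) ⊗ J_t(λ) is nilpotent with minimal polynomial X^{s ∧_λ t}. -/
open Polynomial Matrix
open scoped Kronecker

open scoped Classical in
/-- `wedgeL lam t s` is the operation `t ∧_λ s`: it equals `min t s` if `λ = 0`,
`t` if `λ ≠ 0` and `s ≠ 0`, and `0` if `λ ≠ 0` and `s = 0`. -/
noncomputable def wedgeL {F : Type*} [Field F] (lam : F) (t s : ℕ) : ℕ :=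
  if lam = 0 then min t s else if s = 0 then 0 else t

/-- `jordan F s a` is the `s × s` Jordan block with eigenvalue `a`:
the entry `(i, j)` is `a` if `j = i`, `1` if `j = i + 1`, and `0` otherwise. -/
def jordan (F : Type*) [Field F] (s : ℕ) (a : F) : Matrix (Fin s) (Fin s) F :=
  Matrix.of fun i j => if (j : ℕ) = (i : ℕ) then a else if (j : ℕ) = (i : ℕ) + 1 then 1 else 0

/-!
Powers commute with the Kronecker product, `(A ⊗ B)^k = A^k ⊗ B^k`, and over a field a Kronecker
product vanishes only if one of its factors does. The shift `J_s(0)` has `J_s(0)^k = 0` exactly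
when `s ≤ k`, while for `λ ≠ 0` the block `J_t(λ)` is invertible (its determinant is `λ^t`), so
its powers vanish only in the empty case `t = 0`. Hence `(J_s(0) ⊗ J_t(λ))^k = 0` exactly when
`s ∧_λ t ≤ k`, and an element whose vanishing powers are those of exponent at least `n` has
minimal polynomial `X^n`: the minimal polynomial divides `X^n`, so it is some `X^i` with `i ≤ n`.
-/

theorem minpoly_eq_X_pow_of_pow_eq_zero_iff {K A : Type*} [Field K] [Ring A] [Algebra K A]
    {x : A} {k : ℕ} (h : ∀ l, x ^ l = 0 ↔ k ≤ l) : minpoly K x = X ^ k := by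
  have hk : aeval x (X ^ k : K[X]) = 0 := by simp [(h k).2 le_rfl]
  obtain ⟨i, hik, hassoc⟩ := (dvd_prime_pow prime_X k).mp (minpoly.dvd K x hk)
  have hmin : minpoly K x = X ^ i :=
    eq_of_monic_of_associated (minpoly.monic ⟨_, monic_X_pow k, hk⟩) (monic_X_pow i) hassoc
  have hi : x ^ i = 0 := by simpa [hmin] using minpoly.aeval K x
  rw [hmin, le_antisymm hik ((h i).1 hi)]

namespace Matrix

theorem kronecker_pow {α l n : Type*} [Fintype l] [Fintype n] [DecidableEq l] [DecidableEq n]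
    [CommSemiring α] (A : Matrix l l α) (B : Matrix n n α) (k : ℕ) :
    (A ⊗ₖ B) ^ k = (A ^ k) ⊗ₖ (B ^ k) := by
  induction k with
  | zero => simp
  | succ k ih => rw [pow_succ, pow_succ, pow_succ, ih, mul_kronecker_mul]

theorem kronecker_eq_zero_iff {α l m n p : Type*} [MulZeroClass α] [NoZeroDivisors α]
    {A : Matrix l m α} {B : Matrix n p α} : A ⊗ₖ B = 0 ↔ A = 0 ∨ B = 0 := by
  refine ⟨fun h => ?_, ?_⟩
  · by_contra! hAB
    obtain ⟨i, j, hA⟩ : ∃ i j, A i j ≠ 0 := by simpa [← Matrix.ext_iff] using hAB.1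
    obtain ⟨i', j', hB⟩ : ∃ i j, B i j ≠ 0 := by simpa [← Matrix.ext_iff] using hAB.2
    exact mul_ne_zero hA hB (congr_fun₂ h (i, i') (j, j'))
  · rintro (rfl | rfl)
    exacts [zero_kronecker B, kronecker_zero A]

end Matrix

section Jordan

variable {F : Type*} [Field F]

theorem jordan_zero_apply (n : ℕ) (i j : Fin n) :
    jordan F n 0 i j = if (j : ℕ) = i + 1 then 1 else 0 := by
  simp only [jordan, of_apply]
  split_ifs <;> first | rfl | omega

theorem jordan_zero_pow_apply (n k : ℕ) (i j : Fin n) :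
    (jordan F n 0 ^ k) i j = if (j : ℕ) = i + k then 1 else 0 := by
  induction k generalizing i with
  | zero => simp [one_apply, Fin.ext_iff, eq_comm]
  | succ k ih =>
    rw [pow_succ', mul_apply]
    simp only [jordan_zero_apply, ih, ite_mul, one_mul, zero_mul]
    by_cases h : (i : ℕ) + 1 < n
    · rw [Finset.sum_eq_single ⟨i + 1, h⟩ (fun m _ hm => if_neg fun hm' => hm (Fin.ext hm'))
        (by simp), if_pos rfl, add_assoc, add_comm 1 k]
    · rw [Finset.sum_eq_zero fun m _ => if_neg (by omega), if_neg (by omega)]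

theorem jordan_zero_pow_eq_zero_iff {n k : ℕ} : jordan F n 0 ^ k = 0 ↔ n ≤ k := by
  refine ⟨fun h => ?_, fun h => ?_⟩
  · by_contra! hkn
    simpa [jordan_zero_pow_apply] using congr_fun₂ h ⟨0, by omega⟩ ⟨k, hkn⟩
  · ext i j
    rw [jordan_zero_pow_apply, if_neg (by omega), Matrix.zero_apply]

theorem det_jordan (n : ℕ) (a : F) : (jordan F n a).det = a ^ n := by
  rw [det_of_isUpperTriangular]
  · simp [jordan]
  · intro i j (hji : (j : ℕ) < i)
    simp only [jordan, of_apply]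
    rw [if_neg (by omega), if_neg (by omega)]

theorem jordan_pow_eq_zero_iff_of_ne_zero {n k : ℕ} {a : F} (ha : a ≠ 0) :
    jordan F n a ^ k = 0 ↔ n = 0 := by
  refine ⟨fun h => ?_, fun h => ?_⟩
  · by_contra! hn
    have : Nonempty (Fin n) := ⟨⟨0, by omega⟩⟩
    have hunit : IsUnit (jordan F n a) := by
      rw [isUnit_iff_isUnit_det, det_jordan]
      exact (pow_ne_zero n ha).isUnit
    exact (hunit.pow k).ne_zero h
  · subst h
    exact Subsingleton.elim _ _

theorem jordan_zero_kronecker_pow_eq_zero_iff (lam : F) (s t k : ℕ) :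
    (jordan F s 0 ⊗ₖ jordan F t lam) ^ k = 0 ↔ wedgeL lam s t ≤ k := by
  rw [kronecker_pow, kronecker_eq_zero_iff, jordan_zero_pow_eq_zero_iff]
  by_cases hlam : lam = 0
  · subst hlam
    rw [jordan_zero_pow_eq_zero_iff, wedgeL, if_pos rfl, min_le_iff]
  · rw [jordan_pow_eq_zero_iff_of_ne_zero hlam, wedgeL, if_neg hlam]
    split_ifs <;> omega

end Jordan

theorem minpoly_jordan_zero_kronecker_general (F : Type*) [Field F] (lam : F)
    (s t : ℕ) :
    IsNilpotent (jordan F s 0 ⊗ₖ jordan F t lam) ∧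
      minpoly F (jordan F s 0 ⊗ₖ jordan F t lam) = X ^ wedgeL lam s t := by
  have key := jordan_zero_kronecker_pow_eq_zero_iff lam s t
  exact ⟨⟨_, (key _).2 le_rfl⟩, minpoly_eq_X_pow_of_pow_eq_zero_iff key⟩

/-- Let `F` be a field, `λ ∈ F`, and `s`, `t` positive integers. Then `J_s(0) ⊗ J_t(λ)` is
nilpotent with minimal polynomial `X ^ (s ∧_λ t)`. -/
theorem minpoly_jordan_zero_kronecker (F : Type*) [Field F] (lam : F)
    (s t : ℕ) (hs : 0 < s) (ht : 0 < t) :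
    IsNilpotent (jordan F s 0 ⊗ₖ jordan F t lam) ∧
      minpoly F (jordan F s 0 ⊗ₖ jordan F t lam) = X ^ wedgeL lam s t :=
  minpoly_jordan_zero_kronecker_general F lam s t
end

section
/- Let F be an algebraically closed field, let A be an n×n and B an m×m matrix over F (n, m ≥ 1). For γ ∈ F let ι_A(γ) denote the multiplicity of γ as a root of the minimal polynomial of A (and similarly ι_B(γ)). Call a matrix nilpotent if its minimal polynomial is a power of X, and define ρ = min(ι_A(0), ι_B(0)) if both A and B are nilpotent, ρ = ι_A(0) if A is nilpotent and B is not, ρ = ι_B(0) if B is nilpotent and A is not, and ρ = max(ι_A(0), ι_B(0)) if neither is nilpotent. Then the minimal polynomial of A ⊗ B equals X^ρ · Q, where Q is the (monic) least common multiple of the polynomials (X − αβ)^{ι_A(α) ∧ ι_B(β)} taken over all nonzero roots α of the minimal polynomial of A and all nonzero roots β of the minimal polynomial of B (with Q = 1 if this family is empty). -/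
open Polynomial Matrix
open scoped Kronecker

open scoped Classical in
/-- For positive integers `s`, `t`, `wedge F s t` is the largest value of `i + j + 1` over
pairs `0 ≤ i ≤ s-1`, `0 ≤ j ≤ t-1` such that the binomial coefficient `C(i+j, i)`, viewed
as an element of `F`, is nonzero; moreover `wedge F s 0 = wedge F 0 t = 0`. -/
noncomputable def wedge (F : Type*) [Field F] (s t : ℕ) : ℕ :=
  ((Finset.range s) ×ˢ (Finset.range t)).sup
    (fun p => if (((p.1 + p.2).choose p.1 : F)) ≠ 0 then p.1 + p.2 + 1 else 0)

/-!
Over an algebraically closed field every vector is a sum of generalized eigenvectors, so it is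
enough to follow `f ⊗ g` on `u ⊗ w` with `(f - α) ^ s u = 0` and `(g - β) ^ t w = 0`. Since
`f ⊗ g - αβ = (f - α) ⊗ g + α (1 ⊗ (g - β))` is a sum of two commuting operators,
`(f ⊗ g - αβ) ^ K (u ⊗ w) = ∑ i, C(K, i) α ^ (K - i) (f - α) ^ i u ⊗ g ^ i (g - β) ^ (K - i) w`.
For `K = s ∧ t` a term with `i < s` and `K - i < t` carries `C(K, i) = 0` by the maximality in
the definition of `s ∧ t`, and every other term vanishes. If `s ∧ t = i₀ + j₀ + 1` with
`C(i₀ + j₀, i₀) ≠ 0` and `u`, `w` have exact orders `s`, `t`, then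
`(f - α) ^ (s - 1 - i₀) ⊗ (g - β) ^ (t - 1 - j₀)` kills every term of the `(K - 1)`-st power
except the nonzero one with `i = i₀`. At the eigenvalue `0`, `(f ⊗ g) ^ r (u ⊗ w)` is
`f ^ r u ⊗ g ^ r w`; pairing a generalized `0`-eigenvector of `f` with an eigenvector of `g` for
a nonzero eigenvalue, or with a generalized `0`-eigenvector of `g`, gives the case distinction
defining `ρ`. The matrix statement is the case `f = toLin' A`, `g = toLin' B`.
-/

open TensorProduct Finset

theorem Polynomial.exists_eq_X_pow_iff {F : Type*} [Field F] [IsAlgClosed F] {p : F[X]}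
    (hp : p.Monic) : (∃ k, p = X ^ k) ↔ ∀ a, p.IsRoot a → a = 0 := by
  constructor
  · rintro ⟨k, rfl⟩ a ha
    exact (by simpa using ha : a = 0 ∧ _).1
  · intro h
    refine ⟨Multiset.card p.roots, ?_⟩
    have hroots : p.roots = Multiset.replicate (Multiset.card p.roots) 0 :=
      Multiset.eq_replicate_card.2 fun a ha => h a (isRoot_of_mem_roots ha)
    rw [(IsAlgClosed.splits p).eq_prod_roots_of_monic hp, hroots]
    simp

namespace Module.End

variable {F V : Type*} [Field F] [AddCommGroup V] [Module F V]

theorem aeval_X_sub_C_pow (f : End F V) (γ : F) (k : ℕ) :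
    aeval f ((X - C γ) ^ k) = (f - γ • 1) ^ k := by
  simp [Algebra.algebraMap_eq_smul_one]

theorem aeval_apply_eq_zero_of_dvd {f : End F V} {p q : F[X]} {v : V} (hpq : p ∣ q)
    (hp : aeval f p v = 0) : aeval f q v = 0 := by
  obtain ⟨r, rfl⟩ := hpq
  rw [mul_comm, map_mul, mul_apply, hp, map_zero]

theorem minpoly_isRoot_of_pow_rootMultiplicity_apply_eq_zero {f : End F V} {γ : F} {v : V}
    (hv : ((f - γ • 1) ^ (minpoly F f).rootMultiplicity γ) v = 0) (hv0 : v ≠ 0) :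
    (minpoly F f).IsRoot γ := by
  by_contra h
  rw [rootMultiplicity_eq_zero h, pow_zero, one_apply] at hv
  exact hv0 hv

theorem pow_apply_pow_pred_eq_smul {f : End F V} {γ : F} {v : V} {t : ℕ} (ht : 0 < t)
    (hv : ((f - γ • 1) ^ t) v = 0) (k : ℕ) :
    (f ^ k) (((f - γ • 1) ^ (t - 1)) v) = γ ^ k • ((f - γ • 1) ^ (t - 1)) v := by
  have heigen : f (((f - γ • 1) ^ (t - 1)) v) = γ • ((f - γ • 1) ^ (t - 1)) v := by
    have h : (f - γ • 1) (((f - γ • 1) ^ (t - 1)) v) = 0 := by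
      rw [← mul_apply, ← pow_succ', Nat.sub_add_cancel ht, hv]
    simpa [sub_eq_zero] using h
  induction k with
  | zero => simp
  | succ k ih => rw [pow_succ', mul_apply, ih, map_smul, heigen, smul_smul, pow_succ]

variable [FiniteDimensional F V]

theorem pow_rootMultiplicity_minpoly_apply_eq_zero {f : End F V} {γ : F} {v : V} {k : ℕ}
    (hv : ((f - γ • 1) ^ k) v = 0) :
    ((f - γ • 1) ^ (minpoly F f).rootMultiplicity γ) v = 0 := by
  obtain ⟨q, hfac, hq⟩ := exists_eq_pow_rootMultiplicity_mul_and_not_dvd (minpoly F f)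
    (minpoly.ne_zero_of_finite F f) γ
  obtain ⟨a, b, hab⟩ :=
    ((irreducible_X_sub_C γ).coprime_iff_not_dvd.2 hq).pow_left (m := k)
  -- `aeval f (b * q)` fixes `v` because `(X - C γ) ^ k` kills it
  have hfix : aeval f (b * q) v = v := by
    have := congr($(congrArg (aeval f) hab) v)
    rwa [map_add, map_one, LinearMap.add_apply, map_mul, mul_apply,
      aeval_X_sub_C_pow, hv, map_zero, zero_add, one_apply] at this
  have hkill : (X - C γ) ^ (minpoly F f).rootMultiplicity γ * (b * q) = b * minpoly F f := by
    conv_rhs => rw [hfac]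
    ring
  rw [← hfix, ← aeval_X_sub_C_pow, ← mul_apply, ← map_mul, hkill, map_mul,
    minpoly.aeval, mul_zero, LinearMap.zero_apply]

theorem lt_rootMultiplicity_minpoly {f : End F V} {γ : F} {v : V} {k r : ℕ}
    (hv : ((f - γ • 1) ^ k) v = 0) (hr : ((f - γ • 1) ^ r) v ≠ 0) :
    r < (minpoly F f).rootMultiplicity γ := by
  by_contra! hle
  exact hr (pow_map_zero_of_le hle (pow_rootMultiplicity_minpoly_apply_eq_zero hv))

theorem exists_pow_pred_rootMultiplicity_apply_ne_zero {f : End F V} {γ : F}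
    (hγ : (minpoly F f).IsRoot γ) :
    ∃ v, ((f - γ • 1) ^ (minpoly F f).rootMultiplicity γ) v = 0 ∧
      ((f - γ • 1) ^ ((minpoly F f).rootMultiplicity γ - 1)) v ≠ 0 := by
  have hne := minpoly.ne_zero_of_finite F f
  have he := (rootMultiplicity_pos hne).2 hγ
  obtain ⟨q, hfac, -⟩ := exists_eq_pow_rootMultiplicity_mul_and_not_dvd (minpoly F f) hne γ
  have hq : q ≠ 0 := by rintro rfl; exact hne (by rw [hfac, mul_zero])
  have hX := X_sub_C_ne_zero γ
  have hlt : aeval f ((X - C γ) ^ ((minpoly F f).rootMultiplicity γ - 1) * q) ≠ 0 := by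
    intro h
    have := natDegree_le_of_dvd (minpoly.dvd F f h) (mul_ne_zero (pow_ne_zero _ hX) hq)
    conv_lhs at this => rw [hfac]
    rw [natDegree_mul (pow_ne_zero _ hX) hq, natDegree_mul (pow_ne_zero _ hX) hq,
      natDegree_pow, natDegree_pow, natDegree_X_sub_C] at this
    omega
  obtain ⟨x, hx⟩ := DFunLike.ne_iff.1 hlt
  refine ⟨aeval f q x, ?_, ?_⟩
  · rw [← aeval_X_sub_C_pow, ← mul_apply, ← map_mul, ← hfac, minpoly.aeval,
      LinearMap.zero_apply]
  · rwa [← aeval_X_sub_C_pow, ← mul_apply, ← map_mul]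

theorem exists_pow_pred_rootMultiplicity_zero_apply_ne_zero {f : End F V}
    (h : 0 < (minpoly F f).rootMultiplicity 0) :
    ∃ v, (f ^ (minpoly F f).rootMultiplicity 0) v = 0 ∧
      (f ^ ((minpoly F f).rootMultiplicity 0 - 1)) v ≠ 0 := by
  simpa using exists_pow_pred_rootMultiplicity_apply_ne_zero
    ((rootMultiplicity_pos (minpoly.ne_zero_of_finite F f)).1 h)

theorem iSup_ker_pow_rootMultiplicity_minpoly_eq_top [IsAlgClosed F] (f : End F V) :
    ⨆ γ, LinearMap.ker ((f - γ • 1) ^ (minpoly F f).rootMultiplicity γ) = ⊤ := by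
  refine eq_top_iff.2 ((iSup_maxGenEigenspace_eq_top f).symm.le.trans (iSup_mono fun γ v hv => ?_))
  obtain ⟨k, hk⟩ := (mem_maxGenEigenspace f γ v).1 hv
  exact pow_rootMultiplicity_minpoly_apply_eq_zero hk

end Module.End

section Wedge

variable (F : Type*) [Field F]

theorem le_wedge {s t i j : ℕ} (hi : i < s) (hj : j < t) (h : ((i + j).choose i : F) ≠ 0) :
    i + j + 1 ≤ wedge F s t := by
  rw [wedge]
  refine le_sup_of_le (b := (i, j)) (mem_product.2 ⟨mem_range.2 hi, mem_range.2 hj⟩) ?_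
  rw [if_pos h]

theorem choose_wedge_eq_zero {s t i : ℕ} (hi : i ≤ wedge F s t) (hs : i < s)
    (ht : wedge F s t - i < t) : ((wedge F s t).choose i : F) = 0 := by
  by_contra h
  have := le_wedge F hs ht (by rwa [Nat.add_sub_cancel' hi])
  omega

theorem exists_wedge_eq {s t : ℕ} (hs : 0 < s) (ht : 0 < t) :
    ∃ i j, i < s ∧ j < t ∧ ((i + j).choose i : F) ≠ 0 ∧ wedge F s t = i + j + 1 := by
  classical
  have hpos := le_wedge F hs ht (i := 0) (j := 0) (by simp)
  obtain ⟨⟨i, j⟩, hij, hsup⟩ :=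
    exists_mem_eq_sup (range s ×ˢ range t) ⟨(0, 0), by simp [hs, ht]⟩
    (fun p : ℕ × ℕ => if ((p.1 + p.2).choose p.1 : F) ≠ 0 then p.1 + p.2 + 1 else 0)
  rw [mem_product, mem_range, mem_range] at hij
  have hw : wedge F s t = if ((i + j).choose i : F) ≠ 0 then i + j + 1 else 0 := by
    rw [wedge]; exact hsup
  split_ifs at hw with h
  · exact ⟨i, j, hij.1, hij.2, h, hw⟩
  · omega

end Wedge

section KroneckerExponents

variable {F : Type*} [Field F]

-- `ρ` and `Q` of the statement, as functions of the minimal polynomials `p` of `A` and `q` of `B`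
open scoped Classical in
noncomputable def kroneckerZeroOrder (p q : F[X]) : ℕ :=
  if ∃ k, p = X ^ k then
    if ∃ k, q = X ^ k then min (p.rootMultiplicity 0) (q.rootMultiplicity 0)
    else p.rootMultiplicity 0
  else if ∃ k, q = X ^ k then q.rootMultiplicity 0
  else max (p.rootMultiplicity 0) (q.rootMultiplicity 0)

open scoped Classical in
noncomputable def kroneckerNonzeroPart (p q : F[X]) : F[X] :=
  ((p.roots.toFinset.filter (· ≠ 0)) ×ˢ (q.roots.toFinset.filter (· ≠ 0))).lcm
    (fun x => (X - C (x.1 * x.2)) ^ wedge F (p.rootMultiplicity x.1) (q.rootMultiplicity x.2))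

theorem min_le_kroneckerZeroOrder (p q : F[X]) :
    min (p.rootMultiplicity 0) (q.rootMultiplicity 0) ≤ kroneckerZeroOrder p q := by
  unfold kroneckerZeroOrder
  split_ifs <;> omega

theorem rootMultiplicity_zero_le_kroneckerZeroOrder_left {p q : F[X]} (hq : ¬ ∃ k, q = X ^ k) :
    p.rootMultiplicity 0 ≤ kroneckerZeroOrder p q := by
  unfold kroneckerZeroOrder
  split_ifs <;> omega

theorem rootMultiplicity_zero_le_kroneckerZeroOrder_right {p q : F[X]} (hp : ¬ ∃ k, p = X ^ k) :
    q.rootMultiplicity 0 ≤ kroneckerZeroOrder p q := by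
  unfold kroneckerZeroOrder
  split_ifs <;> omega

theorem kroneckerZeroOrder_le {p q : F[X]} {n : ℕ}
    (hmin : min (p.rootMultiplicity 0) (q.rootMultiplicity 0) ≤ n)
    (hp : ¬ (∃ k, q = X ^ k) → p.rootMultiplicity 0 ≤ n)
    (hq : ¬ (∃ k, p = X ^ k) → q.rootMultiplicity 0 ≤ n) :
    kroneckerZeroOrder p q ≤ n := by
  unfold kroneckerZeroOrder
  split_ifs with h₁ h₂ h₂
  exacts [hmin, hp h₂, hq h₁, max_le (hp h₂) (hq h₁)]

theorem monic_kroneckerNonzeroPart (p q : F[X]) : (kroneckerNonzeroPart p q).Monic := by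
  classical
  have hne : kroneckerNonzeroPart p q ≠ 0 := by
    rw [kroneckerNonzeroPart, Ne, Finset.lcm_eq_zero_iff]
    rintro ⟨x, -, hx⟩
    exact pow_ne_zero _ (X_sub_C_ne_zero _) hx
  simpa only [kroneckerNonzeroPart, Finset.normalize_lcm] using monic_normalize hne

theorem isCoprime_X_pow_kroneckerNonzeroPart (p q : F[X]) (n : ℕ) :
    IsCoprime (X ^ n) (kroneckerNonzeroPart p q) := by
  classical
  refine IsCoprime.pow_left (IsCoprime.of_isCoprime_of_dvd_right
    (IsCoprime.prod_right fun x hx => ?_) (lcm_dvd_prod _ _))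
  simp only [mem_product, mem_filter] at hx
  simpa using (isCoprime_X_sub_C_of_isUnit_sub (R := F) (a := 0) (b := x.1 * x.2)
    (by simpa using mul_ne_zero hx.1.2 hx.2.2)).pow_right

end KroneckerExponents

namespace TensorProduct

section

variable {R M N P : Type*} [CommSemiring R] [AddCommMonoid M] [Module R M] [AddCommMonoid N]
  [Module R N] [AddCommMonoid P] [Module R P]

theorem eq_zero_of_tmul_eq_zero_of_iSup_eq_top {ι κ : Type*} {p : ι → Submodule R M}
    {q : κ → Submodule R N} (hp : ⨆ i, p i = ⊤) (hq : ⨆ j, q j = ⊤)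
    {φ : M ⊗[R] N →ₗ[R] P}
    (h : ∀ i j, ∀ x ∈ p i, ∀ y ∈ q j, φ (x ⊗ₜ y) = 0) : φ = 0 := by
  have hφ : (mk R M N).compr₂ φ = 0 := by
    refine LinearMap.ext_on (s := ⋃ i, (p i : Set M)) (by rw [← Submodule.iSup_eq_span, hp]) ?_
    intro x hx
    obtain ⟨i, hx⟩ := Set.mem_iUnion.1 hx
    refine LinearMap.ext_on (s := ⋃ j, (q j : Set N)) (by rw [← Submodule.iSup_eq_span, hq]) ?_
    intro y hy
    obtain ⟨j, hy⟩ := Set.mem_iUnion.1 hy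
    exact h i j x hx y hy
  ext x y
  exact LinearMap.congr_fun₂ hφ x y

end

variable {F V W : Type*} [Field F] [AddCommGroup V] [Module F V] [AddCommGroup W] [Module F W]

theorem tmul_ne_zero {u : V} {w : W} (hu : u ≠ 0) (hw : w ≠ 0) : u ⊗ₜ[F] w ≠ 0 := by
  obtain ⟨φ, hφ⟩ : ∃ φ : Module.Dual F V, φ u ≠ 0 := by
    by_contra! h; exact hu ((Module.forall_dual_apply_eq_zero_iff F u).1 h)
  obtain ⟨ψ, hψ⟩ : ∃ ψ : Module.Dual F W, ψ w ≠ 0 := by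
    by_contra! h; exact hw ((Module.forall_dual_apply_eq_zero_iff F w).1 h)
  intro h
  have := congrArg ((TensorProduct.lid F F).toLinearMap ∘ₗ map φ ψ) h
  rw [LinearMap.comp_apply, map_tmul, map_zero, LinearEquiv.coe_coe, lid_tmul, smul_eq_mul] at this
  exact mul_ne_zero hφ hψ this

theorem map_sub_smul_one_eq (f : Module.End F V) (g : Module.End F W) (α β : F) :
    map f g - (α * β) • 1 = map (f - α • 1) g + α • map 1 (g - β • 1) := by
  ext u w
  simp [sub_tmul, tmul_sub, smul_tmul, smul_sub, mul_smul]

theorem map_sub_smul_one_pow_tmul (f : Module.End F V) (g : Module.End F W) (α β : F) (K : ℕ)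
    (u : V) (w : W) :
    ((map f g - (α * β) • 1) ^ K) (u ⊗ₜ w) =
      ∑ i ∈ range (K + 1), ((K.choose i : F) * α ^ (K - i)) •
        (((f - α • 1) ^ i) u ⊗ₜ ((g ^ i * (g - β • 1) ^ (K - i)) w)) := by
  have hcomm : Commute (map (f - α • 1) g) (α • map 1 (g - β • 1)) := by
    refine Commute.smul_right ?_ α
    rw [Commute, SemiconjBy, ← TensorProduct.map_mul, ← TensorProduct.map_mul, mul_one, one_mul,
      show g * (g - β • 1) = (g - β • 1) * g by noncomm_ring]
  rw [map_sub_smul_one_eq, hcomm.add_pow, LinearMap.sum_apply]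
  refine sum_congr rfl fun i _ => ?_
  rw [_root_.smul_pow, TensorProduct.map_pow, TensorProduct.map_pow, mul_smul_comm,
    ← TensorProduct.map_mul, one_pow, mul_one, smul_mul_assoc, LinearMap.smul_apply,
    Module.End.mul_apply, Module.End.natCast_apply, map_nsmul, map_tmul,
    ← Nat.cast_smul_eq_nsmul F, smul_smul, mul_comm]

section

variable {f : Module.End F V} {g : Module.End F W} {α β : F} {s t : ℕ} {u : V} {w : W}

theorem map_sub_smul_one_pow_wedge_tmul_eq_zero (hu : ((f - α • 1) ^ s) u = 0)
    (hw : ((g - β • 1) ^ t) w = 0) :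
    ((map f g - (α * β) • 1) ^ wedge F s t) (u ⊗ₜ w) = 0 := by
  rw [map_sub_smul_one_pow_tmul]
  refine sum_eq_zero fun i hi => ?_
  rcases le_or_gt s i with hsi | hsi
  · rw [Module.End.pow_map_zero_of_le hsi hu, zero_tmul, smul_zero]
  rcases le_or_gt t (wedge F s t - i) with hti | hti
  · rw [Module.End.mul_apply, Module.End.pow_map_zero_of_le hti hw, map_zero, tmul_zero,
      smul_zero]
  · rw [choose_wedge_eq_zero F (Nat.lt_succ_iff.1 (mem_range.1 hi)) hsi hti, zero_mul, zero_smul]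

theorem map_sub_smul_one_pow_wedge_sub_one_tmul_ne_zero (hα : α ≠ 0) (hβ : β ≠ 0)
    (hs : 0 < s) (ht : 0 < t) (hu : ((f - α • 1) ^ s) u = 0)
    (hu' : ((f - α • 1) ^ (s - 1)) u ≠ 0) (hw : ((g - β • 1) ^ t) w = 0)
    (hw' : ((g - β • 1) ^ (t - 1)) w ≠ 0) :
    ((map f g - (α * β) • 1) ^ (wedge F s t - 1)) (u ⊗ₜ w) ≠ 0 := by
  obtain ⟨i₀, j₀, hi₀, hj₀, hC, hK⟩ := exists_wedge_eq F hs ht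
  have hcomm : ∀ a b, Commute ((g - β • 1) ^ a) (g ^ b) :=
    ((Commute.refl g).sub_left ((Commute.one_left g).smul_left β)).pow_pow
  -- `(f - α) ^ (s - 1 - i₀) ⊗ (g - β) ^ (t - 1 - j₀)` isolates the term `i = i₀`
  have hterm : ∀ i, map ((f - α • 1) ^ (s - 1 - i₀)) ((g - β • 1) ^ (t - 1 - j₀))
      (((f - α • 1) ^ i) u ⊗ₜ ((g ^ i * (g - β • 1) ^ (wedge F s t - 1 - i)) w)) =
      ((f - α • 1) ^ (s - 1 - i₀ + i)) u ⊗ₜ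
        (g ^ i) (((g - β • 1) ^ (t - 1 - j₀ + (wedge F s t - 1 - i))) w) := fun i => by
    rw [map_tmul, ← Module.End.mul_apply, ← pow_add, ← Module.End.mul_apply, ← mul_assoc,
      (hcomm _ _).eq, mul_assoc, ← pow_add, Module.End.mul_apply]
  intro h
  apply congrArg (map ((f - α • 1) ^ (s - 1 - i₀)) ((g - β • 1) ^ (t - 1 - j₀))) at h
  rw [map_sub_smul_one_pow_tmul, map_sum, map_zero, sum_eq_single i₀] at h
  · rw [LinearMap.map_smul, hterm, show s - 1 - i₀ + i₀ = s - 1 by omega,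
      show t - 1 - j₀ + (wedge F s t - 1 - i₀) = t - 1 by omega,
      Module.End.pow_apply_pow_pred_eq_smul ht hw, tmul_smul, smul_smul,
      smul_eq_zero, show wedge F s t - 1 = i₀ + j₀ by omega] at h
    exact h.elim (mul_ne_zero (mul_ne_zero hC (pow_ne_zero _ hα)) (pow_ne_zero _ hβ))
      (tmul_ne_zero hu' hw')
  · intro i _ hi
    rw [LinearMap.map_smul, hterm]
    rcases lt_or_gt_of_ne hi with hi | hi
    · rw [Module.End.pow_map_zero_of_le (by omega) hw, map_zero, tmul_zero, smul_zero]
    · rw [Module.End.pow_map_zero_of_le (by omega) hu, zero_tmul, smul_zero]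
  · exact fun h => absurd (mem_range.2 (by omega)) h

end

variable (f : Module.End F V) (g : Module.End F W)

theorem minpoly_map_comm : minpoly F (map f g) = minpoly F (map g f) := by
  rw [← minpoly.algEquiv_eq ((TensorProduct.comm F V W).conjAlgEquiv F) (map f g)]
  congr 1
  ext w v
  simp

variable [FiniteDimensional F V] [FiniteDimensional F W]

theorem wedge_le_rootMultiplicity_minpoly_map {α β : F} (hα : α ≠ 0) (hβ : β ≠ 0)
    (hαf : (minpoly F f).IsRoot α) (hβg : (minpoly F g).IsRoot β) :
    wedge F ((minpoly F f).rootMultiplicity α) ((minpoly F g).rootMultiplicity β) ≤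
      (minpoly F (map f g)).rootMultiplicity (α * β) := by
  have hs := (rootMultiplicity_pos (minpoly.ne_zero_of_finite F f)).2 hαf
  have ht := (rootMultiplicity_pos (minpoly.ne_zero_of_finite F g)).2 hβg
  obtain ⟨u, hu, hu'⟩ := Module.End.exists_pow_pred_rootMultiplicity_apply_ne_zero hαf
  obtain ⟨w, hw, hw'⟩ := Module.End.exists_pow_pred_rootMultiplicity_apply_ne_zero hβg
  have := Module.End.lt_rootMultiplicity_minpoly (map_sub_smul_one_pow_wedge_tmul_eq_zero hu hw)
    (map_sub_smul_one_pow_wedge_sub_one_tmul_ne_zero hα hβ hs ht hu hu' hw hw')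
  omega

theorem kroneckerNonzeroPart_dvd_minpoly_map :
    kroneckerNonzeroPart (minpoly F f) (minpoly F g) ∣ minpoly F (map f g) := by
  classical
  refine Finset.lcm_dvd fun x hx => ?_
  simp only [mem_product, mem_filter, Multiset.mem_toFinset] at hx
  rw [← le_rootMultiplicity_iff (minpoly.ne_zero_of_finite F _)]
  exact wedge_le_rootMultiplicity_minpoly_map f g hx.1.2 hx.2.2 (isRoot_of_mem_roots hx.1.1)
    (isRoot_of_mem_roots hx.2.1)

theorem lt_rootMultiplicity_zero_minpoly_map {u : V} {w : W} {k r : ℕ}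
    (hk : (f ^ k) u = 0 ∨ (g ^ k) w = 0) (hu : (f ^ r) u ≠ 0) (hw : (g ^ r) w ≠ 0) :
    r < (minpoly F (map f g)).rootMultiplicity 0 := by
  refine Module.End.lt_rootMultiplicity_minpoly (v := u ⊗ₜ w) (k := k) ?_ ?_ <;>
    rw [zero_smul, sub_zero, TensorProduct.map_pow, map_tmul]
  · rcases hk with hk | hk <;> simp [hk]
  · exact tmul_ne_zero hu hw

theorem min_rootMultiplicity_zero_le_rootMultiplicity_minpoly_map :
    min ((minpoly F f).rootMultiplicity 0) ((minpoly F g).rootMultiplicity 0) ≤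
      (minpoly F (map f g)).rootMultiplicity 0 := by
  set s := (minpoly F f).rootMultiplicity 0
  set t := (minpoly F g).rootMultiplicity 0
  rcases Nat.eq_zero_or_pos (min s t) with h0 | hpos
  · omega
  obtain ⟨u, hu, hu'⟩ :=
    Module.End.exists_pow_pred_rootMultiplicity_zero_apply_ne_zero (lt_min_iff.1 hpos).1
  obtain ⟨w, hw, hw'⟩ :=
    Module.End.exists_pow_pred_rootMultiplicity_zero_apply_ne_zero (lt_min_iff.1 hpos).2
  have := lt_rootMultiplicity_zero_minpoly_map f g (k := min s t) (r := min s t - 1)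
    (by rcases le_total s t with h | h
        · exact .inl (Module.End.pow_map_zero_of_le (by omega) hu)
        · exact .inr (Module.End.pow_map_zero_of_le (by omega) hw))
    (fun h => hu' (Module.End.pow_map_zero_of_le (by omega) h))
    (fun h => hw' (Module.End.pow_map_zero_of_le (by omega) h))
  omega

theorem rootMultiplicity_zero_le_rootMultiplicity_minpoly_map {β : F} (hβ : β ≠ 0)
    (hβg : (minpoly F g).IsRoot β) :
    (minpoly F f).rootMultiplicity 0 ≤ (minpoly F (map f g)).rootMultiplicity 0 := by
  rcases Nat.eq_zero_or_pos ((minpoly F f).rootMultiplicity 0) with h0 | hpos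
  · omega
  obtain ⟨u, hu, hu'⟩ := Module.End.exists_pow_pred_rootMultiplicity_zero_apply_ne_zero hpos
  obtain ⟨w, hw⟩ := (Module.End.hasEigenvalue_of_isRoot hβg).exists_hasEigenvector
  have := lt_rootMultiplicity_zero_minpoly_map f g (.inl hu) hu'
    (by rw [hw.pow_apply]; exact smul_ne_zero (pow_ne_zero _ hβ) hw.2)
  omega

variable [IsAlgClosed F]

theorem X_pow_kroneckerZeroOrder_dvd_minpoly_map :
    X ^ kroneckerZeroOrder (minpoly F f) (minpoly F g) ∣ minpoly F (map f g) := by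
  rw [show (X : F[X]) = X - C 0 by simp, ← le_rootMultiplicity_iff
    (minpoly.ne_zero_of_finite F _)]
  refine kroneckerZeroOrder_le (min_rootMultiplicity_zero_le_rootMultiplicity_minpoly_map f g)
    (fun hg => ?_) (fun hf => ?_)
  · obtain ⟨β, hβg, hβ⟩ : ∃ β, (minpoly F g).IsRoot β ∧ β ≠ 0 := by
      simpa using (exists_eq_X_pow_iff (minpoly.monic (.of_finite F g))).not.1 hg
    exact rootMultiplicity_zero_le_rootMultiplicity_minpoly_map f g hβ hβg
  · obtain ⟨α, hαf, hα⟩ : ∃ α, (minpoly F f).IsRoot α ∧ α ≠ 0 := by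
      simpa using (exists_eq_X_pow_iff (minpoly.monic (.of_finite F f))).not.1 hf
    rw [minpoly_map_comm]
    exact rootMultiplicity_zero_le_rootMultiplicity_minpoly_map g f hα hαf

theorem map_pow_kroneckerZeroOrder_tmul_eq_zero {α β : F} {u : V} {w : W}
    (hαβ : α = 0 ∨ β = 0) (hαf : (minpoly F f).IsRoot α) (hβg : (minpoly F g).IsRoot β)
    (hu : ((f - α • 1) ^ (minpoly F f).rootMultiplicity α) u = 0)
    (hw : ((g - β • 1) ^ (minpoly F g).rootMultiplicity β) w = 0) :
    (map f g ^ kroneckerZeroOrder (minpoly F f) (minpoly F g)) (u ⊗ₜ w) = 0 := by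
  rw [TensorProduct.map_pow, map_tmul]
  rcases eq_or_ne α 0 with rfl | hα <;> rcases eq_or_ne β 0 with rfl | hβ
  · simp only [zero_smul, sub_zero] at hu hw
    rcases le_total ((minpoly F f).rootMultiplicity 0) ((minpoly F g).rootMultiplicity 0) with h | h
    · rw [Module.End.pow_map_zero_of_le
        (min_eq_left h ▸ min_le_kroneckerZeroOrder _ _) hu, zero_tmul]
    · rw [Module.End.pow_map_zero_of_le
        (min_eq_right h ▸ min_le_kroneckerZeroOrder _ _) hw, tmul_zero]
  · simp only [zero_smul, sub_zero] at hu
    rw [Module.End.pow_map_zero_of_le (rootMultiplicity_zero_le_kroneckerZeroOrder_left fun h =>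
      hβ ((exists_eq_X_pow_iff (minpoly.monic (.of_finite F g))).1 h β hβg)) hu, zero_tmul]
  · simp only [zero_smul, sub_zero] at hw
    rw [Module.End.pow_map_zero_of_le (rootMultiplicity_zero_le_kroneckerZeroOrder_right fun h =>
      hα ((exists_eq_X_pow_iff (minpoly.monic (.of_finite F f))).1 h α hαf)) hw, tmul_zero]
  · exact (hαβ.elim hα hβ).elim

theorem aeval_map_X_pow_mul_kroneckerNonzeroPart_tmul {α β : F} {u : V} {w : W}
    (hu : ((f - α • 1) ^ (minpoly F f).rootMultiplicity α) u = 0)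
    (hw : ((g - β • 1) ^ (minpoly F g).rootMultiplicity β) w = 0) :
    aeval (map f g) (X ^ kroneckerZeroOrder (minpoly F f) (minpoly F g) *
      kroneckerNonzeroPart (minpoly F f) (minpoly F g)) (u ⊗ₜ w) = 0 := by
  rcases eq_or_ne u 0 with rfl | hu0
  · simp
  rcases eq_or_ne w 0 with rfl | hw0
  · simp
  have hαf := Module.End.minpoly_isRoot_of_pow_rootMultiplicity_apply_eq_zero hu hu0
  have hβg := Module.End.minpoly_isRoot_of_pow_rootMultiplicity_apply_eq_zero hw hw0
  by_cases hαβ : α = 0 ∨ β = 0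
  · refine Module.End.aeval_apply_eq_zero_of_dvd (dvd_mul_right _ _) ?_
    rw [aeval_X_pow]
    exact map_pow_kroneckerZeroOrder_tmul_eq_zero f g hαβ hαf hβg hu hw
  obtain ⟨hα, hβ⟩ := not_or.1 hαβ
  classical
  refine Module.End.aeval_apply_eq_zero_of_dvd (dvd_mul_of_dvd_right (Finset.dvd_lcm
    (s := (_ ×ˢ _)) (b := (α, β)) ?_) _) ?_
  · simp only [mem_product, mem_filter, Multiset.mem_toFinset, mem_roots', ne_eq,
      minpoly.ne_zero_of_finite F, not_false_eq_true, true_and]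
    exact ⟨⟨hαf, hα⟩, hβg, hβ⟩
  · rw [Module.End.aeval_X_sub_C_pow]
    exact map_sub_smul_one_pow_wedge_tmul_eq_zero hu hw

theorem aeval_map_X_pow_mul_kroneckerNonzeroPart :
    aeval (map f g) (X ^ kroneckerZeroOrder (minpoly F f) (minpoly F g) *
      kroneckerNonzeroPart (minpoly F f) (minpoly F g)) = 0 :=
  eq_zero_of_tmul_eq_zero_of_iSup_eq_top
    (Module.End.iSup_ker_pow_rootMultiplicity_minpoly_eq_top f)
    (Module.End.iSup_ker_pow_rootMultiplicity_minpoly_eq_top g)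
    fun _ _ _ hu _ hw => aeval_map_X_pow_mul_kroneckerNonzeroPart_tmul f g hu hw

theorem minpoly_map :
    minpoly F (map f g) = X ^ kroneckerZeroOrder (minpoly F f) (minpoly F g) *
      kroneckerNonzeroPart (minpoly F f) (minpoly F g) :=
  eq_of_monic_of_associated (minpoly.monic (.of_finite F _))
    ((monic_X_pow _).mul (monic_kroneckerNonzeroPart _ _))
    (associated_of_dvd_dvd (minpoly.dvd F _ (aeval_map_X_pow_mul_kroneckerNonzeroPart f g))
      ((isCoprime_X_pow_kroneckerNonzeroPart _ _ _).mul_dvd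
        (X_pow_kroneckerZeroOrder_dvd_minpoly_map f g) (kroneckerNonzeroPart_dvd_minpoly_map f g)))

end TensorProduct

theorem Matrix.minpoly_kronecker_eq_minpoly_map {F n m : Type*} [Field F] [Fintype n] [Fintype m]
    [DecidableEq n] [DecidableEq m] (A : Matrix n n F) (B : Matrix m m F) :
    minpoly F (A ⊗ₖ B) = minpoly F (TensorProduct.map (toLin' A) (toLin' B)) := by
  rw [← LinearMap.minpoly_toMatrix ((Pi.basisFun F n).tensorProduct (Pi.basisFun F m)),
    toMatrix_map, LinearMap.toMatrix_eq_toMatrix', LinearMap.toMatrix_eq_toMatrix',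
    LinearMap.toMatrix'_toLin', LinearMap.toMatrix'_toLin']

open scoped Classical in
theorem minpoly_kronecker_general (F : Type*) [Field F] [IsAlgClosed F] (n m : ℕ)
    (A : Matrix (Fin n) (Fin n) F) (B : Matrix (Fin m) (Fin m) F) :
    minpoly F (A ⊗ₖ B) =
      X ^ (if ∃ k, minpoly F A = X ^ k then
             if ∃ k, minpoly F B = X ^ k then
               min ((minpoly F A).rootMultiplicity 0) ((minpoly F B).rootMultiplicity 0)
             else (minpoly F A).rootMultiplicity 0
           else if ∃ k, minpoly F B = X ^ k then (minpoly F B).rootMultiplicity 0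
           else max ((minpoly F A).rootMultiplicity 0) ((minpoly F B).rootMultiplicity 0)) *
      (((minpoly F A).roots.toFinset.filter (· ≠ 0)) ×ˢ
          ((minpoly F B).roots.toFinset.filter (· ≠ 0))).lcm
        (fun p => (X - C (p.1 * p.2)) ^
          wedge F ((minpoly F A).rootMultiplicity p.1) ((minpoly F B).rootMultiplicity p.2)) := by
  rw [Matrix.minpoly_kronecker_eq_minpoly_map, TensorProduct.minpoly_map, Matrix.minpoly_toLin',
    Matrix.minpoly_toLin']
  rfl

open scoped Classical in
/-- Let `F` be an algebraically closed field and `A`, `B` square matrices over `F` of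
positive sizes.  For `γ ∈ F` let `ι_A(γ)` be the multiplicity of `γ` as a root of the
minimal polynomial of `A`; call a matrix nilpotent if its minimal polynomial is a power
of `X`, and set `ρ = min(ι_A(0), ι_B(0))` if both `A` and `B` are nilpotent, `ρ = ι_A(0)`
if only `A` is nilpotent, `ρ = ι_B(0)` if only `B` is nilpotent, and
`ρ = max(ι_A(0), ι_B(0))` otherwise.  Then the minimal polynomial of `A ⊗ B` equals
`X ^ ρ * Q`, where `Q` is the monic least common multiple of the polynomials
`(X − αβ) ^ (ι_A(α) ∧ ι_B(β))` over all nonzero roots `α` of `minpoly F A` and all nonzero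
roots `β` of `minpoly F B`. -/
theorem minpoly_kronecker (F : Type*) [Field F] [IsAlgClosed F] (n m : ℕ)
    (hn : 0 < n) (hm : 0 < m)
    (A : Matrix (Fin n) (Fin n) F) (B : Matrix (Fin m) (Fin m) F) :
    minpoly F (A ⊗ₖ B) =
      X ^ (if ∃ k, minpoly F A = X ^ k then
             if ∃ k, minpoly F B = X ^ k then
               min ((minpoly F A).rootMultiplicity 0) ((minpoly F B).rootMultiplicity 0)
             else (minpoly F A).rootMultiplicity 0
           else if ∃ k, minpoly F B = X ^ k then (minpoly F B).rootMultiplicity 0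
           else max ((minpoly F A).rootMultiplicity 0) ((minpoly F B).rootMultiplicity 0)) *
      (((minpoly F A).roots.toFinset.filter (· ≠ 0)) ×ˢ
          ((minpoly F B).roots.toFinset.filter (· ≠ 0))).lcm
        (fun p => (X - C (p.1 * p.2)) ^
          wedge F ((minpoly F A).rootMultiplicity p.1) ((minpoly F B).rootMultiplicity p.2)) :=
  minpoly_kronecker_general F n m A B
end
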